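/- Local invertibility for the discrete trigonometric moment map: let T ≥ 1, N ≥ 2T, and α = (α₁,…,α_T) ∈ ℂ^T with ‖α‖₂ ≤ 1/(8T^{3/2}). Then there exist real angles θ₁,…,θ_{2T} such that α_k = (1/(2T))·Σ_{l=1}^{2T} e^{ikθ_l} for all 1 ≤ k ≤ T. -/

import Mathlib

/-!
Put `z_l = e^{iθ_l}` and `p_k = 2T α_k`. Newton's identities turn the prescribed power sums
`p_1, …, p_T` into the top coefficients `1, a_1, …, a_T` of `∏ (X - z_l)`, and the smallness of
`α` gives `∑ |a_k| ≤ 1/3`. Completing them to the self-inversive polynomial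
`P = ∑_{k ≤ T} a_k X^{2T-k} + λ ∑_{k < T} conj(a_k) X^k` (with `|λ| = 1` chosen so that
`μ e^{-iTθ} P(e^{iθ})` is real for a suitable unimodular `μ`) gives a real trigonometric
polynomial within `2 ∑ |a_k| < 2` of `2 cos(Tθ + arg μ)`. It therefore changes sign `2T` times on
a period, so `P` has `2T` distinct roots on the unit circle. By Vieta these roots have the
prescribed top elementary symmetric functions, and Newton's identities give back the power sums.
-/
open Finset Polynomial Complex ComplexConjugate
open scoped Real

/-- The top coefficients `a₀ = 1, a₁, …` of a monic polynomial whose roots have power sums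
`p 0, p 1, …`, computed by Newton's identities; note that `p i` stands for the `(i + 1)`-st
power sum. -/
noncomputable def newtonSeq {K : Type*} [Field K] (p : ℕ → K) : ℕ → K
  | 0 => 1
  | k + 1 => -((k : K) + 1)⁻¹ * ∑ i ∈ range (k + 1), p i * newtonSeq p (k - i)

section NewtonSeq

variable {K : Type*} [Field K] (p : ℕ → K)

@[simp]
theorem newtonSeq_zero : newtonSeq p 0 = 1 := by
  rw [newtonSeq]

theorem newtonSeq_succ (k : ℕ) :
    newtonSeq p (k + 1) = -((k : K) + 1)⁻¹ * ∑ i ∈ range (k + 1), p i * newtonSeq p (k - i) := by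
  rw [newtonSeq]

theorem succ_mul_newtonSeq_succ [CharZero K] (k : ℕ) :
    ((k : K) + 1) * newtonSeq p (k + 1) = -∑ i ∈ range (k + 1), p i * newtonSeq p (k - i) := by
  rw [newtonSeq_succ, ← mul_assoc, mul_neg, mul_inv_cancel₀ (Nat.cast_add_one_ne_zero k),
    neg_one_mul]

end NewtonSeq

section NewtonSeqBound

variable {K : Type*} [RCLike K] (p : ℕ → K)

theorem norm_newtonSeq_succ_le (k : ℕ) :
    ‖newtonSeq p (k + 1)‖ ≤ ∑ i ∈ range (k + 1), ‖p i‖ * ‖newtonSeq p (k - i)‖ := by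
  have h : ‖((k : K) + 1)⁻¹‖ ≤ 1 := by
    rw [norm_inv, ← Nat.cast_succ, RCLike.norm_natCast]
    exact inv_le_one_of_one_le₀ (by simp)
  rw [newtonSeq_succ, norm_mul, norm_neg]
  calc _ ≤ 1 * ‖∑ i ∈ range (k + 1), p i * newtonSeq p (k - i)‖ := by gcongr
    _ ≤ _ := by
      rw [one_mul]
      exact (norm_sum_le _ _).trans_eq (by simp only [norm_mul])

/-- A self-improving estimate: it bounds `∑ ‖aₖ‖` by `S / (1 - S)` whenever `S < 1`. -/
theorem sum_norm_newtonSeq_le (T : ℕ) :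
    ∑ k ∈ range T, ‖newtonSeq p (k + 1)‖ ≤
      (∑ i ∈ range T, ‖p i‖) * (1 + ∑ k ∈ range T, ‖newtonSeq p (k + 1)‖) := by
  set A := ∑ k ∈ range T, ‖newtonSeq p (k + 1)‖
  have hhead : ∀ i ∈ range T, ∑ j ∈ range (T - i), ‖newtonSeq p j‖ ≤ 1 + A := fun i _ => by
    calc ∑ j ∈ range (T - i), ‖newtonSeq p j‖ ≤ ∑ j ∈ range (T + 1), ‖newtonSeq p j‖ :=
          sum_le_sum_of_subset_of_nonneg (range_subset_range.2 (by omega)) fun _ _ _ =>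
            norm_nonneg _
      _ = 1 + A := by rw [sum_range_succ', newtonSeq_zero, norm_one, add_comm]
  calc A ≤ ∑ k ∈ range T, ∑ i ∈ range (k + 1), ‖p i‖ * ‖newtonSeq p (k - i)‖ :=
        sum_le_sum fun k _ => norm_newtonSeq_succ_le p k
    _ = ∑ i ∈ range T, ‖p i‖ * ∑ j ∈ range (T - i), ‖newtonSeq p j‖ := by
        simp only [sum_range_diag_flip T (fun i j => ‖p i‖ * ‖newtonSeq p j‖), mul_sum]
    _ ≤ ∑ i ∈ range T, ‖p i‖ * (1 + A) := sum_le_sum fun i hi => by gcongr; exact hhead i hi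
    _ = _ := by rw [sum_mul]

end NewtonSeqBound

theorem eq_of_newton_recursion {R : Type*} [CommRing R] {a p q : ℕ → R} {T : ℕ} (ha : a 0 = 1)
    (hp : ∀ k < T, ((k : R) + 1) * a (k + 1) = -∑ i ∈ range (k + 1), p i * a (k - i))
    (hq : ∀ k < T, ((k : R) + 1) * a (k + 1) = -∑ i ∈ range (k + 1), q i * a (k - i)) :
    ∀ k < T, p k = q k := by
  intro k
  induction k using Nat.strong_induction_on with
  | _ k ih =>
    intro hk
    have hsum : ∑ i ∈ range (k + 1), (p i - q i) * a (k - i) = 0 := by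
      simp only [sub_mul, sum_sub_distrib]
      linear_combination hp k hk - hq k hk
    rw [sum_range_succ, sum_eq_zero fun i hi => by
      rw [ih i (mem_range.1 hi) (by have := mem_range.1 hi; omega), sub_self, zero_mul],
      Nat.sub_self, ha, mul_one, zero_add] at hsum
    exact sub_eq_zero.1 hsum

/-- Newton's identities for `(-1)ᵐ eₘ(z)`, the coefficient of `X ^ (n - m)` in `∏ (X - z j)`:
the recursion that `newtonSeq` solves. -/
theorem newton_signed_esymm {R : Type*} [CommRing R] {σ : Type*} [Fintype σ] (z : σ → R)
    (k : ℕ) :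
    ((k : R) + 1) * ((-1) ^ (k + 1) * (univ.val.map z).esymm (k + 1)) =
      -∑ i ∈ range (k + 1),
        (∑ j, z j ^ (i + 1)) * ((-1) ^ (k - i) * (univ.val.map z).esymm (k - i)) := by
  have h := congrArg (MvPolynomial.aeval z) (MvPolynomial.mul_esymm_eq_sum σ R (k + 1))
  simp only [map_mul, map_pow, map_neg, map_one, map_natCast, map_sum,
    MvPolynomial.aeval_esymm_eq_multiset_esymm, MvPolynomial.psum, map_sum, map_pow,
    MvPolynomial.aeval_X] at h
  rw [sum_filter, Nat.sum_antidiagonal_succ', if_neg (lt_irrefl _),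
    zero_add, ← Nat.sum_antidiagonal_swap, Nat.sum_antidiagonal_eq_sum_range_succ_mk] at h
  simp only [Prod.swap_prod_mk, Nat.succ_eq_add_one] at h
  rw [sum_congr rfl fun i _ => if_pos (by omega)] at h
  have hsign : ((-1 : R) ^ (k + 1)) * (-1) ^ (k + 1 + 1) = -1 := by
    rw [← pow_add]; exact Odd.neg_one_pow ⟨k + 1, by ring⟩
  have hterms : ∑ i ∈ range (k + 1), (-1) ^ (k - i) * (univ.val.map z).esymm (k - i) *
      ∑ j, z j ^ (i + 1) = ∑ i ∈ range (k + 1),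
        (∑ j, z j ^ (i + 1)) * ((-1) ^ (k - i) * (univ.val.map z).esymm (k - i)) :=
    sum_congr rfl fun _ _ => by ring
  rw [hterms] at h
  push_cast at h
  linear_combination (-1) ^ (k + 1) * h + (∑ i ∈ range (k + 1),
        (∑ j, z j ^ (i + 1)) * ((-1) ^ (k - i) * (univ.val.map z).esymm (k - i))) * hsign

theorem psum_eq_of_signed_esymm_eq_newtonSeq {K : Type*} [Field K] [CharZero K] {σ : Type*}
    [Fintype σ] (z : σ → K) (p : ℕ → K) {T : ℕ}
    (h : ∀ m ≤ T, (-1) ^ m * (univ.val.map z).esymm m = newtonSeq p m) :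
    ∀ k < T, ∑ j, z j ^ (k + 1) = p k := by
  refine fun k hk => (eq_of_newton_recursion (q := fun i => ∑ j, z j ^ (i + 1))
    (newtonSeq_zero p) (fun k _ => succ_mul_newtonSeq_succ p k) (fun k hk => ?_) k hk).symm
  rw [← h (k + 1) hk, newton_signed_esymm]
  exact congrArg _ (sum_congr rfl fun i hi => by rw [h (k - i) (by omega)])

theorem Polynomial.Monic.coeff_eq_esymm_of_injective {R : Type*} [CommRing R] [IsDomain R]
    {ι : Type*} [Fintype ι] {P : R[X]} (hP : P.Monic) (hdeg : P.natDegree = Fintype.card ι)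
    {z : ι → R} (hz : Function.Injective z) (hroot : ∀ i, P.IsRoot (z i)) {m : ℕ}
    (hm : m ≤ Fintype.card ι) :
    P.coeff (Fintype.card ι - m) = (-1) ^ m * (univ.val.map z).esymm m := by
  have hroots : univ.val.map z = P.roots := by
    refine Multiset.eq_of_le_of_card_le ((Multiset.le_iff_subset (univ.nodup.map hz)).2 ?_) ?_
    · intro x hx
      obtain ⟨i, -, rfl⟩ := Multiset.mem_map.1 hx
      exact (mem_roots hP.ne_zero).2 (hroot i)
    · simpa [hdeg] using card_roots' P
  rw [coeff_eq_esymm_roots_of_card (by rw [← hroots, hdeg]; simp) (by omega), hP.leadingCoeff,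
    one_mul, hdeg, Nat.sub_sub_self hm, hroots]

/-- Completes the top coefficients `a 0, …, a T` to a self-inversive polynomial of degree `2T`. -/
noncomputable def selfInvPoly (T : ℕ) (a : ℕ → ℂ) (c : ℂ) : ℂ[X] :=
  ∑ k ∈ range (T + 1), C (a k) * X ^ (2 * T - k) + ∑ k ∈ range T, C (c * conj (a k)) * X ^ k

section SelfInvPoly

variable (T : ℕ) (a : ℕ → ℂ) (c : ℂ)

theorem coeff_selfInvPoly_two_mul_sub {m : ℕ} (hm : m ≤ T) :
    (selfInvPoly T a c).coeff (2 * T - m) = a m := by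
  simp only [selfInvPoly, coeff_add, finsetSum_coeff, coeff_C_mul, coeff_X_pow]
  rw [sum_eq_zero (s := range T) fun k hk => by
      rw [if_neg (by have := mem_range.1 hk; omega), mul_zero],
    add_zero, sum_eq_single m (fun k hk hkm => by
      rw [if_neg (by have := mem_range.1 hk; omega), mul_zero])
      (fun h => absurd (mem_range.2 (by omega)) h), if_pos rfl, mul_one]

theorem natDegree_selfInvPoly_le : (selfInvPoly T a c).natDegree ≤ 2 * T := by
  refine (natDegree_add_le _ _).trans (max_le ?_ ?_) <;>
    refine natDegree_sum_le_of_forall_le _ _ fun k hk => (natDegree_C_mul_le _ _).trans ?_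
  · exact (natDegree_X_pow_le _).trans (by omega)
  · exact (natDegree_X_pow_le _).trans (by have := mem_range.1 hk; omega)

theorem coeff_selfInvPoly_two_mul (ha : a 0 = 1) : (selfInvPoly T a c).coeff (2 * T) = 1 := by
  rw [← ha, ← coeff_selfInvPoly_two_mul_sub T a c (Nat.zero_le T), Nat.sub_zero]

theorem selfInvPoly_monic (ha : a 0 = 1) : (selfInvPoly T a c).Monic :=
  monic_of_natDegree_le_of_coeff_eq_one _ (natDegree_selfInvPoly_le T a c)
    (coeff_selfInvPoly_two_mul T a c ha)

theorem natDegree_selfInvPoly (ha : a 0 = 1) : (selfInvPoly T a c).natDegree = 2 * T :=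
  natDegree_eq_of_le_of_coeff_ne_zero (natDegree_selfInvPoly_le T a c)
    (by rw [coeff_selfInvPoly_two_mul T a c ha]; exact one_ne_zero)

theorem mul_eval_selfInvPoly {μ w : ℂ} (hμ : μ * c = conj μ) (hw : w * conj w = 1) :
    μ * (selfInvPoly T a c).eval w =
      w ^ T * ((∑ k ∈ range T, μ * a k * w ^ (T - k)) + μ * a T +
        conj (∑ k ∈ range T, μ * a k * w ^ (T - k))) := by
  have hhigh : ∀ k ≤ T, μ * (a k * w ^ (2 * T - k)) = w ^ T * (μ * a k * w ^ (T - k)) :=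
    fun k hk => by rw [show 2 * T - k = T + (T - k) by omega, pow_add]; ring
  have hlow : ∀ k ≤ T, μ * (c * conj (a k) * w ^ k) = w ^ T * conj (μ * a k * w ^ (T - k)) :=
    fun k hk => by
      calc μ * (c * conj (a k) * w ^ k) = conj μ * conj (a k) * w ^ k * (w * conj w) ^ (T - k) := by
            rw [hw, one_pow, mul_one, ← hμ]; ring
        _ = w ^ (k + (T - k)) * (conj μ * conj (a k) * conj w ^ (T - k)) := by ring
        _ = _ := by rw [Nat.add_sub_cancel' hk, map_mul, map_mul, map_pow]
  simp only [selfInvPoly, eval_add, eval_finsetSum, eval_mul, eval_C, eval_pow, eval_X, mul_add,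
    mul_sum, sum_range_succ]
  rw [sum_congr rfl fun k hk => hhigh k (mem_range.1 hk).le,
    sum_congr rfl fun k hk => hlow k (mem_range.1 hk).le, hhigh T le_rfl, map_sum, mul_sum,
    Nat.sub_self, pow_zero]
  ring

end SelfInvPoly

theorem exists_mem_Ioo_eq_zero_of_mul_neg {f : ℝ → ℝ} {x y : ℝ} (hxy : x ≤ y)
    (hf : ContinuousOn f (Set.Icc x y)) (h : f x * f y < 0) : ∃ z ∈ Set.Ioo x y, f z = 0 := by
  rcases lt_or_gt_of_ne (left_ne_zero_of_mul h.ne) with hx | hx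
  · exact intermediate_value_Ioo hxy hf ⟨hx, by nlinarith⟩
  · exact intermediate_value_Ioo' hxy hf ⟨by nlinarith, hx⟩

/-- Equals `μ e^{-iTθ} P(e^{iθ})` for `P = selfInvPoly T a c` when `μ c = conj μ` and `μ a T` is
real. -/
noncomputable def selfInvTrig (T : ℕ) (a : ℕ → ℂ) (μ : ℂ) (θ : ℝ) : ℝ :=
  2 * (∑ k ∈ range T, μ * a k * exp (θ * I) ^ (T - k)).re + (μ * a T).re

section SelfInvTrig

variable (T : ℕ) (a : ℕ → ℂ) (μ : ℂ)

theorem continuous_selfInvTrig : Continuous (selfInvTrig T a μ) := by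
  unfold selfInvTrig
  fun_prop

theorem abs_selfInvTrig_sub_le (hT : 0 < T) (ha : a 0 = 1) (hμ : ‖μ‖ = 1) (θ : ℝ) :
    |selfInvTrig T a μ θ - 2 * (μ * exp (θ * I) ^ T).re| ≤ 2 * ∑ k ∈ range T, ‖a (k + 1)‖ := by
  obtain ⟨n, rfl⟩ : ∃ n, T = n + 1 := ⟨T - 1, by omega⟩
  set R := ∑ i ∈ range n, μ * a (i + 1) * exp (θ * I) ^ (n + 1 - (i + 1))
  have hR : ‖R‖ ≤ ∑ i ∈ range n, ‖a (i + 1)‖ := (norm_sum_le _ _).trans_eq <|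
    sum_congr rfl fun i _ => by rw [norm_mul, norm_mul, hμ, norm_pow, norm_exp_ofReal_mul_I]; simp
  have hsplit : selfInvTrig (n + 1) a μ θ - 2 * (μ * exp (θ * I) ^ (n + 1)).re =
      2 * R.re + (μ * a (n + 1)).re := by
    simp only [selfInvTrig, sum_range_succ' _ n, ha, Nat.sub_zero, mul_one, add_re]
    ring
  rw [hsplit, sum_range_succ]
  calc |2 * R.re + (μ * a (n + 1)).re| ≤ 2 * ‖R‖ + ‖a (n + 1)‖ := by
        refine (abs_add_le _ _).trans (add_le_add ?_ ?_)
        · rw [abs_mul, abs_two]; gcongr; exact abs_re_le_norm R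
        · exact (abs_re_le_norm _).trans (by rw [norm_mul, hμ, one_mul])
    _ ≤ _ := by linarith [norm_nonneg (a (n + 1))]

end SelfInvTrig

theorem isRoot_selfInvPoly_of_selfInvTrig_eq_zero {T : ℕ} {a : ℕ → ℂ} {c μ : ℂ}
    (hμc : μ * c = conj μ) (hμ : μ ≠ 0) (hreal : ((μ * a T).re : ℂ) = μ * a T) {θ : ℝ}
    (h : selfInvTrig T a μ θ = 0) : (selfInvPoly T a c).IsRoot (exp (θ * I)) := by
  have hw : exp (θ * I) * conj (exp (θ * I)) = 1 := by
    rw [mul_conj, normSq_eq_norm_sq, norm_exp_ofReal_mul_I]; simp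
  have hval : μ * (selfInvPoly T a c).eval (exp (θ * I)) =
      exp (θ * I) ^ T * (selfInvTrig T a μ θ : ℂ) := by
    rw [mul_eval_selfInvPoly T a c hμc hw, add_right_comm, add_conj, selfInvTrig]
    push_cast
    rw [hreal]
  rw [h, Complex.ofReal_zero, mul_zero, mul_eq_zero] at hval
  exact hval.resolve_left hμ

theorem unit_mul_exp_pow_eq_neg_one_pow {μ : ℂ} (hμ : ‖μ‖ = 1) {T : ℕ} (hT : 0 < T) (m : ℕ) :
    μ * exp (((m * π - arg μ) / T : ℝ) * I) ^ T = (-1) ^ m := by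
  have hμexp : exp (arg μ * I) = μ := by
    simpa [hμ] using norm_mul_exp_arg_mul_I μ
  rw [← exp_nat_mul]
  nth_rw 1 [← hμexp]
  rw [← exp_add, ← exp_pi_mul_I, ← exp_nat_mul]
  congr 1
  have : (T : ℂ) ≠ 0 := by exact_mod_cast hT.ne'
  push_cast
  field_simp
  ring

/-- At the nodes where `μ e^{iTθ} = ±1`, the small coefficients `a₁, …, a_T` cannot flip the sign
of `selfInvTrig`, so it changes sign between consecutive nodes. -/
theorem selfInvTrig_node_mul_succ_neg {T : ℕ} (hT : 0 < T) {a : ℕ → ℂ} (ha : a 0 = 1)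
    (hsmall : ∑ k ∈ range T, ‖a (k + 1)‖ < 1) {μ : ℂ} (hμ : ‖μ‖ = 1) (m : ℕ) :
    selfInvTrig T a μ ((m * π - arg μ) / T) *
      selfInvTrig T a μ (((m + 1 : ℕ) * π - arg μ) / T) < 0 := by
  have hnode (k : ℕ) : |selfInvTrig T a μ ((k * π - arg μ) / T) - 2 * (-1) ^ k| < 2 := by
    have h := abs_selfInvTrig_sub_le T a μ hT ha hμ ((k * π - arg μ) / T)
    rw [unit_mul_exp_pow_eq_neg_one_pow hμ hT k,
      show (-1 : ℂ) ^ k = ((-1 : ℝ) ^ k : ℝ) by push_cast; rfl, ofReal_re] at h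
    linarith
  have h0 := abs_lt.1 (hnode m)
  have h1 := abs_lt.1 (hnode (m + 1))
  rw [pow_succ] at h1
  rcases neg_one_pow_eq_or ℝ m with hs | hs <;> rw [hs] at h0 h1 <;> nlinarith

theorem exists_angles_isRoot_selfInvPoly {T : ℕ} (hT : 0 < T) {a : ℕ → ℂ} (ha : a 0 = 1)
    (hsmall : ∑ k ∈ range T, ‖a (k + 1)‖ < 1) :
    ∃ (c : ℂ) (θ : Fin (2 * T) → ℝ), Function.Injective (fun l => exp (θ l * I)) ∧
      ∀ l, (selfInvPoly T a c).IsRoot (exp (θ l * I)) := by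
  set μ : ℂ := exp ((-arg (a T) : ℝ) * I)
  have hμ : ‖μ‖ = 1 := norm_exp_ofReal_mul_I _
  have hreal : μ * a T = (‖a T‖ : ℝ) := by
    conv_lhs => rw [← norm_mul_exp_arg_mul_I (a T)]
    rw [mul_left_comm, ← exp_add, ofReal_neg, neg_mul, neg_add_cancel, exp_zero, mul_one]
  have hμc : μ * conj μ ^ 2 = conj μ := by
    have : μ * conj μ = 1 := by rw [mul_conj, normSq_eq_norm_sq, hμ]; simp
    linear_combination conj μ * this
  set t : ℕ → ℝ := fun m => (m * π - arg μ) / T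
  have ht : StrictMono t := fun m m' h => by
    simp only [t]; gcongr
  have hzero : ∀ m, ∃ x ∈ Set.Ioo (t m) (t (m + 1)), selfInvTrig T a μ x = 0 := fun m =>
    exists_mem_Ioo_eq_zero_of_mul_neg (ht m.lt_succ_self).le
      (continuous_selfInvTrig T a μ).continuousOn (selfInvTrig_node_mul_succ_neg hT ha hsmall hμ m)
  choose θ hθ hθzero using hzero
  refine ⟨conj μ ^ 2, fun l => θ l, ?_, fun l => isRoot_selfInvPoly_of_selfInvTrig_eq_zero hμc
    (norm_ne_zero_iff.1 (by rw [hμ]; exact one_ne_zero)) (by rw [hreal, ofReal_re]) (hθzero l)⟩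
  have hmono : StrictMono fun l : Fin (2 * T) => θ l := fun l l' h =>
    (hθ l).2.trans ((ht.monotone (Nat.succ_le_of_lt h)).trans_lt (hθ l').1)
  have hperiod : t (2 * T) = t 0 + 2 * π := by
    simp only [t]; field_simp; push_cast; ring
  have hIco : ∀ l : Fin (2 * T), θ l ∈ Set.Ico (t 0) (t 0 + 2 * π) := fun l =>
    ⟨(ht.monotone (Nat.zero_le l)).trans (hθ l).1.le,
      hperiod ▸ (hθ l).2.trans_le (ht.monotone (Nat.succ_le_of_lt l.isLt))⟩
  refine fun l l' h => hmono.injective <|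
    Circle.exp_injOn_Ico (add_sub_cancel_left _ _).le (hIco l) (hIco l') ?_
  ext
  simpa only [Circle.coe_exp] using h

theorem exists_angles_psum_eq {T : ℕ} (hT : 0 < T) (p : ℕ → ℂ)
    (hp : ∑ k ∈ range T, ‖p k‖ ≤ 1 / 4) :
    ∃ θ : Fin (2 * T) → ℝ, ∀ k < T, ∑ l, exp (θ l * I) ^ (k + 1) = p k := by
  have hsmall : ∑ k ∈ range T, ‖newtonSeq p (k + 1)‖ < 1 := by
    have hA := sum_norm_newtonSeq_le p T
    have hA0 : 0 ≤ ∑ k ∈ range T, ‖newtonSeq p (k + 1)‖ := by positivity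
    nlinarith
  obtain ⟨c, θ, hinj, hroot⟩ := exists_angles_isRoot_selfInvPoly hT (newtonSeq_zero p) hsmall
  refine ⟨θ, psum_eq_of_signed_esymm_eq_newtonSeq _ p fun m hm => ?_⟩
  have hcard : Fintype.card (Fin (2 * T)) = 2 * T := Fintype.card_fin _
  have hvieta := (selfInvPoly_monic T _ c (newtonSeq_zero p)).coeff_eq_esymm_of_injective
    (by rw [natDegree_selfInvPoly T _ c (newtonSeq_zero p), hcard]) hinj hroot (m := m)
    (by rw [hcard]; omega)
  rwa [hcard, coeff_selfInvPoly_two_mul_sub T _ c hm, eq_comm] at hvieta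

theorem exists_angles_moment_eq {T : ℕ} (hT : 0 < T) (α : Fin T → ℂ)
    (hα : ∑ k, ‖α k‖ ≤ 1 / (8 * T)) :
    ∃ θ : Fin (2 * T) → ℝ, ∀ k : Fin T,
      α k = 1 / (2 * T) * ∑ l, exp (I * ((k : ℕ) + 1 : ℕ) * θ l) := by
  have hTC : (T : ℂ) ≠ 0 := Nat.cast_ne_zero.2 hT.ne'
  set p : ℕ → ℂ := fun k => if h : k < T then 2 * T * α ⟨k, h⟩ else 0 with hp_def
  have hp : ∑ k ∈ range T, ‖p k‖ ≤ 1 / 4 := by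
    rw [← Fin.sum_univ_eq_sum_range]
    simp only [hp_def, Fin.is_lt, dif_pos, Fin.eta, norm_mul, ← mul_sum, Complex.norm_ofNat,
      Complex.norm_natCast]
    calc 2 * T * ∑ k, ‖α k‖ ≤ 2 * T * (1 / (8 * T)) := by gcongr
      _ = 1 / 4 := by field_simp; ring
  obtain ⟨θ, hθ⟩ := exists_angles_psum_eq hT p hp
  refine ⟨θ, fun k => ?_⟩
  have hk := hθ k k.isLt
  simp only [hp_def, dif_pos k.isLt, Fin.eta] at hk
  have hpow (l : Fin (2 * T)) :
      exp (I * ((k : ℕ) + 1 : ℕ) * θ l) = exp (θ l * I) ^ ((k : ℕ) + 1) := by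
    rw [← exp_nat_mul]; push_cast; ring_nf
  rw [sum_congr rfl fun l _ => hpow l, hk]
  field_simp

theorem sum_norm_le_sqrt_card_mul_sqrt_sum_sq {ι E : Type*} [SeminormedAddCommGroup E]
    (s : Finset ι) (f : ι → E) : ∑ i ∈ s, ‖f i‖ ≤ √(#s : ℝ) * √(∑ i ∈ s, ‖f i‖ ^ 2) := by
  simpa [mul_comm] using Real.sum_mul_le_sqrt_mul_sqrt s (fun i => ‖f i‖) fun _ => 1

theorem discrete_trig_moment_local_invertibility_general (T : ℕ) (hT : 1 ≤ T) (α : Fin T → ℂ)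
    (hα : Real.sqrt (∑ k, ‖α k‖ ^ 2) ≤ 1 / (8 * (T : ℝ) ^ ((3 : ℝ) / 2))) :
    ∃ θ : Fin (2 * T) → ℝ, ∀ k : Fin T,
      α k = (1 / (2 * T : ℂ)) *
        ∑ l, Complex.exp (Complex.I * ((k : ℕ) + 1 : ℕ) * (θ l)) := by
  have hT0 : (0 : ℝ) < T := by exact_mod_cast hT
  have h32 : (T : ℝ) ^ ((3 : ℝ) / 2) = T * √T := by
    rw [Real.sqrt_eq_rpow, ← Real.rpow_one_add' hT0.le (by norm_num)]; norm_num
  refine exists_angles_moment_eq hT α ?_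
  calc ∑ k, ‖α k‖ ≤ √T * √(∑ k, ‖α k‖ ^ 2) := by
        simpa using sum_norm_le_sqrt_card_mul_sqrt_sum_sq univ α
    _ ≤ √T * (1 / (8 * (T * √T))) := by rw [← h32]; gcongr
    _ = 1 / (8 * T) := by field_simp

/-- Local invertibility for the discrete trigonometric moment map: if `T ≥ 1`,
`N ≥ 2T`, and `α ∈ ℂ^T` has ℓ₂ norm at most `1/(8T^{3/2})`, then there are real
angles `θ₁,…,θ_{2T}` with `α_k = (1/(2T))·Σ_{l=1}^{2T} e^{ikθ_l}` for `1 ≤ k ≤ T`. -/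
theorem discrete_trig_moment_local_invertibility (T : ℕ) (hT : 1 ≤ T) (N : ℕ)
    (hN : 2 * T ≤ N) (α : Fin T → ℂ)
    (hα : Real.sqrt (∑ k, ‖α k‖ ^ 2) ≤ 1 / (8 * (T : ℝ) ^ ((3 : ℝ) / 2))) :
    ∃ θ : Fin (2 * T) → ℝ, ∀ k : Fin T,
      α k = (1 / (2 * T : ℂ)) *
        ∑ l, Complex.exp (Complex.I * ((k : ℕ) + 1 : ℕ) * (θ l)) :=
  discrete_trig_moment_local_invertibility_general T hT α hα
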